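/- Let f ∈ C_B[0,∞), and let a_0(n), a_1(n) be convergent real sequences satisfying 2a_0(n) − a_1(n) = 1 for all n (no positivity of the operators is assumed). Then for every x ≥ 0, lim_{n→∞} V_{n,1}(f; x) = f(x). -/

import Mathlib

open MeasureTheory Filter Topology

/-- Baskakov basis function `p_{n,k}(x) = C(n+k-1, k) x^k / (1+x)^{n+k}`. -/
noncomputable def bask (n k : ℕ) (x : ℝ) : ℝ :=
  (Nat.choose (n + k - 1) k : ℝ) * x ^ k / (1 + x) ^ (n + k)

/-- Modified basis `p^1_{n,k}(x) = a(x,n) p_{n+1,k}(x) + b(x,n) p_{n+1,k-1}(x)`,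
with `p_{n+1,-1} = 0`. -/
noncomputable def p1 (a0 a1 : ℕ → ℝ) (n k : ℕ) (x : ℝ) : ℝ :=
  (a0 n + a1 n * x) * bask (n + 1) k x
    + (a0 n - a1 n * (1 + x)) * (if k = 0 then 0 else bask (n + 1) (k - 1) x)

/-- First-order modified Baskakov–Durrmeyer operator. -/
noncomputable def V1 (a0 a1 : ℕ → ℝ) (n : ℕ) (f : ℝ → ℝ) (x : ℝ) : ℝ :=
  ((n : ℝ) - 1) * ∑' k : ℕ, p1 a0 a1 n k x * ∫ t in Set.Ioi (0 : ℝ), bask n k t * f t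

/-!
Because `Σₖ p¹ₙₖ(x) = a(x,n) + b(x,n) = 2a₀(n) - a₁(n) = 1`, the error is
`V_{n,1}(f;x) - f(x) = Σₖ p¹ₙₖ(x) (Dₙₖ f - f(x))`, where `Dₙₖ f = (n-1) ∫ pₙₖ f` is an average
against a probability density. Continuity at `x` and boundedness give
`|f t - f x| ≤ ε + K (t - x)²`, hence `|Dₙₖ f - f(x)| ≤ ε + K Dₙₖ((t - x)²)`. The operator is not
positive, but the convergent sequences `a₀, a₁` bound `|a(x,n)|, |b(x,n)| ≤ C`, so
`|p¹ₙₖ(x)| ≤ C (p_{n+1,k}(x) + p_{n+1,k-1}(x))`. Beta integrals give `Dₙₖ((t - x)²)` explicitly,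
and the first two factorial moments of the negative binomial weights `p_{n+1,k}(x)` then give
`Σₖ (p_{n+1,k}(x) + p_{n+1,k-1}(x)) Dₙₖ((t - x)²) = O(1/n)`.
So `|V_{n,1}(f;x) - f(x)| ≤ 2Cε + o(1)`.
-/

open Set
open scoped Nat

lemma abs_integral_mul_sub_le {α : Type*} [MeasurableSpace α] {μ : Measure α} {ρ f g : α → ℝ}
    {c ε : ℝ} (hρ : 0 ≤ᵐ[μ] ρ) (hρ_int : Integrable ρ μ) (hρ_one : ∫ t, ρ t ∂μ = 1)
    (hρg : Integrable (fun t => ρ t * g t) μ) (hf : AEStronglyMeasurable f μ)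
    (hfg : ∀ᵐ t ∂μ, |f t - c| ≤ ε + g t) :
    |∫ t, ρ t * f t ∂μ - c| ≤ ε + ∫ t, ρ t * g t ∂μ := by
  have hmaj : Integrable (fun t => ρ t * ε + ρ t * g t) μ := (hρ_int.mul_const ε).add hρg
  have hρfc : Integrable (fun t => ρ t * (f t - c)) μ := by
    refine hmaj.mono' (hρ_int.aestronglyMeasurable.mul (hf.sub aestronglyMeasurable_const)) ?_
    filter_upwards [hρ, hfg] with t hρt hfgt
    rw [norm_mul, Real.norm_of_nonneg hρt, Real.norm_eq_abs, ← mul_add]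
    exact mul_le_mul_of_nonneg_left hfgt hρt
  have hρf : Integrable (fun t => ρ t * f t) μ :=
    (hρfc.add (hρ_int.mul_const c)).congr
      (Eventually.of_forall fun t => by simp only [Pi.add_apply]; ring)
  calc |∫ t, ρ t * f t ∂μ - c| = ‖∫ t, ρ t * (f t - c) ∂μ‖ := by
        simp_rw [mul_sub]
        rw [integral_sub hρf (hρ_int.mul_const c), integral_mul_const, hρ_one, one_mul,
          Real.norm_eq_abs]
    _ ≤ ∫ t, (ρ t * ε + ρ t * g t) ∂μ := by
        refine norm_integral_le_of_norm_le hmaj ?_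
        filter_upwards [hρ, hfg] with t hρt hfgt
        rw [norm_mul, Real.norm_of_nonneg hρt, Real.norm_eq_abs, ← mul_add]
        exact mul_le_mul_of_nonneg_left hfgt hρt
    _ = ε + ∫ t, ρ t * g t ∂μ := by
        rw [integral_add (hρ_int.mul_const ε) hρg, integral_mul_const, hρ_one, one_mul]

lemma exists_abs_sub_le_add_mul_sq {s : Set ℝ} {f : ℝ → ℝ} {x M : ℝ} (hf : ContinuousWithinAt f s x)
    (hx : x ∈ s) (hM : ∀ t ∈ s, |f t| ≤ M) {ε : ℝ} (hε : 0 < ε) :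
    ∃ K, ∀ t ∈ s, |f t - f x| ≤ ε + K * (t - x) ^ 2 := by
  obtain ⟨δ, hδ, hfδ⟩ := Metric.continuousWithinAt_iff.mp hf ε hε
  refine ⟨2 * M / δ ^ 2, fun t ht => ?_⟩
  have hM0 : 0 ≤ M := (abs_nonneg _).trans (hM x hx)
  rcases lt_or_ge |t - x| δ with hnear | hfar
  · have hfx := hfδ ht hnear
    rw [Real.dist_eq] at hfx
    have : 0 ≤ 2 * M / δ ^ 2 * (t - x) ^ 2 := by positivity
    linarith
  · have hδt : δ ^ 2 ≤ (t - x) ^ 2 := by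
      rw [← sq_abs (t - x)]
      exact pow_le_pow_left₀ hδ.le hfar 2
    have : 2 * M ≤ 2 * M / δ ^ 2 * (t - x) ^ 2 := by
      rw [div_mul_eq_mul_div, le_div_iff₀ (by positivity)]
      exact mul_le_mul_of_nonneg_left hδt (by positivity)
    linarith [abs_sub (f t) (f x), hM t ht, hM x hx]

lemma tsum_mul_sub_of_hasSum_one {ι : Type*} {p y : ι → ℝ} {c : ℝ} (hp : HasSum p 1)
    (h : Summable fun i => p i * (y i - c)) : ∑' i, p i * y i - c = ∑' i, p i * (y i - c) := by
  have hpy : Summable fun i => p i * y i :=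
    (h.add (hp.summable.mul_right c)).congr fun i => by ring
  simp_rw [mul_sub]
  rw [hpy.tsum_sub (hp.summable.mul_right c), tsum_mul_right, hp.tsum_eq, one_mul]

lemma tendsto_of_forall_eventually_abs_sub_le {u : ℕ → ℝ} {L C : ℝ}
    (h : ∀ ε > 0, ∃ b : ℕ → ℝ, Tendsto b atTop (𝓝 0) ∧ ∀ᶠ n in atTop, |u n - L| ≤ C * ε + b n) :
    Tendsto u atTop (𝓝 L) := by
  refine Metric.tendsto_nhds.2 fun e he => ?_
  obtain ⟨b, hb, hub⟩ := h (e / (2 * (|C| + 1))) (by positivity)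
  have hCe : C * (e / (2 * (|C| + 1))) < e / 2 := by
    have : |C| / (|C| + 1) < 1 := (div_lt_one (by positivity)).2 (lt_add_one _)
    calc C * (e / (2 * (|C| + 1))) ≤ |C| * (e / (2 * (|C| + 1))) :=
          mul_le_mul_of_nonneg_right (le_abs_self C) (by positivity)
      _ = e / 2 * (|C| / (|C| + 1)) := by field_simp
      _ < e / 2 := mul_lt_of_lt_one_right (by positivity) this
  filter_upwards [hub, hb.eventually (gt_mem_nhds (half_pos he))] with n hun hbn
  rw [Real.dist_eq]
  linarith

lemma tendsto_inv_one_add_pow_atTop {m : ℕ} (hm : m ≠ 0) :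
    Tendsto (fun t : ℝ => ((1 + t) ^ m)⁻¹) atTop (𝓝 0) :=
  ((tendsto_pow_atTop hm).comp (tendsto_atTop_add_const_left _ 1 tendsto_id)).inv_tendsto_atTop

lemma hasDerivAt_inv_one_add_pow (c : ℕ) {t : ℝ} (ht : 0 ≤ t) :
    HasDerivAt (fun t : ℝ => -((c + 1) * (1 + t) ^ (c + 1))⁻¹) ((1 + t) ^ (c + 2))⁻¹ t := by
  have h : 1 + t ≠ 0 := by linarith
  have hd : HasDerivAt (fun t : ℝ => (c + 1) * (1 + t) ^ (c + 1))
      ((c + 1) * ((c + 1 : ℕ) * (1 + t) ^ c * 1)) t :=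
    (((hasDerivAt_id t).const_add 1).pow (c + 1)).const_mul _
  refine (hd.inv (by positivity)).neg.congr_deriv ?_
  field_simp
  push_cast
  ring

lemma tendsto_neg_inv_mul_one_add_pow_atTop (c : ℕ) :
    Tendsto (fun t : ℝ => -((c + 1) * (1 + t) ^ (c + 1))⁻¹) atTop (𝓝 0) := by
  simpa [mul_inv, mul_comm] using
    ((tendsto_inv_one_add_pow_atTop (Nat.succ_ne_zero c)).const_mul ((c : ℝ) + 1)⁻¹).neg

lemma integrableOn_inv_one_add_pow (c : ℕ) :
    IntegrableOn (fun t : ℝ => ((1 + t) ^ (c + 2))⁻¹) (Ioi 0) :=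
  integrableOn_Ioi_deriv_of_nonneg' (fun t ht => hasDerivAt_inv_one_add_pow c ht)
    (fun t ht => inv_nonneg.2 (pow_nonneg (by linarith [ht.out]) _))
    (tendsto_neg_inv_mul_one_add_pow_atTop c)

lemma integral_inv_one_add_pow (c : ℕ) :
    ∫ t in Ioi (0 : ℝ), ((1 + t) ^ (c + 2))⁻¹ = ((c : ℝ) + 1)⁻¹ := by
  rw [integral_Ioi_of_hasDerivAt_of_tendsto' (fun t ht => hasDerivAt_inv_one_add_pow c ht)
    (integrableOn_inv_one_add_pow c) (tendsto_neg_inv_mul_one_add_pow_atTop c)]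
  simp

lemma pow_div_one_add_pow_le {t : ℝ} (ht : 0 ≤ t) (a m : ℕ) :
    t ^ a / (1 + t) ^ (a + m) ≤ ((1 + t) ^ m)⁻¹ := by
  have h : 0 < 1 + t := by linarith
  rw [pow_add, ← one_div, div_le_div_iff₀ (by positivity) (by positivity), one_mul]
  exact mul_le_mul_of_nonneg_right (pow_le_pow_left₀ ht (by linarith) a) (by positivity)

lemma integrableOn_pow_div_one_add_pow (a c : ℕ) :
    IntegrableOn (fun t : ℝ => t ^ a / (1 + t) ^ (a + c + 2)) (Ioi 0) := by
  refine (integrableOn_inv_one_add_pow c).mono' (Measurable.aestronglyMeasurable (by fun_prop)) ?_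
  filter_upwards [self_mem_ae_restrict measurableSet_Ioi] with t ht
  have ht : (0 : ℝ) ≤ t := ht.out.le
  rw [Real.norm_of_nonneg (by positivity), add_assoc]
  exact pow_div_one_add_pow_le ht a (c + 2)

lemma hasDerivAt_pow_succ_div_one_add_pow (a c : ℕ) {t : ℝ} (ht : 0 ≤ t) :
    HasDerivAt (fun t : ℝ => t ^ (a + 1) / (1 + t) ^ (a + c + 2))
      ((a + 1) * (t ^ a / (1 + t) ^ (a + c + 2))
        - (a + c + 2) * (t ^ (a + 1) / (1 + t) ^ (a + 1 + c + 2))) t := by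
  have h : 1 + t ≠ 0 := by linarith
  have hq : HasDerivAt (fun t : ℝ => (1 + t) ^ (a + c + 2))
      ((a + c + 2 : ℕ) * (1 + t) ^ (a + c + 1)) t := by
    simpa using ((hasDerivAt_id t).const_add 1).fun_pow (a + c + 2)
  refine ((hasDerivAt_pow (a + 1) t).div hq (by positivity)).congr_deriv ?_
  rw [show a + 1 + c + 2 = (a + c + 1) + 2 by ring, show a + c + 2 = (a + c + 1) + 1 by ring]
  field_simp
  push_cast
  ring

lemma tendsto_pow_succ_div_one_add_pow_atTop (a c : ℕ) :
    Tendsto (fun t : ℝ => t ^ (a + 1) / (1 + t) ^ (a + c + 2)) atTop (𝓝 0) := by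
  refine squeeze_zero' ?_ ?_ (tendsto_inv_one_add_pow_atTop (Nat.succ_ne_zero c))
  · filter_upwards [eventually_ge_atTop 0] with t ht
    positivity
  · filter_upwards [eventually_ge_atTop 0] with t ht
    rw [show a + c + 2 = a + 1 + (c + 1) by ring]
    exact pow_div_one_add_pow_le ht (a + 1) (c + 1)

lemma integral_pow_succ_div_one_add_pow (a c : ℕ) :
    (a + c + 2) * ∫ t in Ioi (0 : ℝ), t ^ (a + 1) / (1 + t) ^ (a + 1 + c + 2)
      = (a + 1) * ∫ t in Ioi (0 : ℝ), t ^ a / (1 + t) ^ (a + c + 2) := by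
  have h₀ := (integrableOn_pow_div_one_add_pow a c).const_mul ((a : ℝ) + 1)
  have h₁ := (integrableOn_pow_div_one_add_pow (a + 1) c).const_mul ((a : ℝ) + c + 2)
  have key := integral_Ioi_of_hasDerivAt_of_tendsto'
    (fun t ht => hasDerivAt_pow_succ_div_one_add_pow a c ht) (h₀.sub h₁)
    (tendsto_pow_succ_div_one_add_pow_atTop a c)
  rw [integral_sub h₀ h₁, integral_const_mul, integral_const_mul] at key
  simp only [ne_eq, add_eq_zero, one_ne_zero, and_false, not_false_eq_true, zero_pow, zero_div,
    sub_zero] at key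
  linear_combination -key

theorem integral_pow_div_one_add_pow (a c : ℕ) :
    ∫ t in Ioi (0 : ℝ), t ^ a / (1 + t) ^ (a + c + 2) = a ! * c ! / (a + c + 1)! := by
  induction a with
  | zero =>
    simp only [pow_zero, zero_add, one_div, integral_inv_one_add_pow, Nat.factorial_zero,
      Nat.cast_one, one_mul, Nat.factorial_succ, Nat.cast_mul, Nat.cast_add]
    field_simp
  | succ a ih =>
    have key := integral_pow_succ_div_one_add_pow a c
    rw [ih] at key
    have : ((a + c + 1)! : ℝ) ≠ 0 := by positivity
    rw [show a + 1 + c + 1 = (a + c + 1) + 1 by ring, Nat.factorial_succ, Nat.factorial_succ]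
    push_cast at key ⊢
    field_simp at key ⊢
    linear_combination key

lemma bask_nonneg {n k : ℕ} {x : ℝ} (hx : 0 ≤ x) : 0 ≤ bask n k x := by
  unfold bask
  have : 0 < 1 + x := by linarith
  positivity

lemma bask_add_two (c k : ℕ) (t : ℝ) :
    bask (c + 2) k t = (c + 1 + k).choose k * (t ^ k / (1 + t) ^ (k + c + 2)) := by
  unfold bask
  rw [show c + 2 + k - 1 = c + 1 + k by omega, show c + 2 + k = k + c + 2 by ring]
  ring

lemma succ_mul_bask_succ (c k : ℕ) (x : ℝ) :
    ((k : ℝ) + 1) * bask (c + 1) (k + 1) x = (c + 1) * (x * bask (c + 2) k x) := by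
  have hc : ((c + k + 1).choose (k + 1) : ℝ) * (k + 1) = (c + k + 1).choose k * (c + 1) := by
    have := Nat.choose_succ_right_eq (c + k + 1) k
    rw [show c + k + 1 - k = c + 1 by omega] at this
    exact_mod_cast this
  unfold bask
  rw [show c + 1 + (k + 1) - 1 = c + k + 1 by omega, show c + 2 + k - 1 = c + k + 1 by omega,
    show c + 1 + (k + 1) = c + 2 + k by omega, pow_succ]
  linear_combination (x ^ k * x / (1 + x) ^ (c + 2 + k)) * hc

lemma integrableOn_bask {n : ℕ} (hn : 2 ≤ n) (k : ℕ) : IntegrableOn (bask n k) (Ioi 0) := by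
  obtain ⟨c, rfl⟩ := Nat.exists_eq_add_of_le' hn
  simp_rw [funext (bask_add_two c k)]
  exact (integrableOn_pow_div_one_add_pow k c).const_mul _

lemma integral_bask {n : ℕ} (hn : 2 ≤ n) (k : ℕ) :
    ∫ t in Ioi 0, bask n k t = ((n : ℝ) - 1)⁻¹ := by
  obtain ⟨c, rfl⟩ := Nat.exists_eq_add_of_le' hn
  simp_rw [bask_add_two]
  rw [integral_const_mul, integral_pow_div_one_add_pow, show k + c + 1 = c + 1 + k by ring,
    ← Nat.add_choose_mul_factorial_mul_factorial, Nat.factorial_succ]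
  have : (c ! : ℝ) ≠ 0 := by positivity
  have : (k ! : ℝ) ≠ 0 := by positivity
  have : ((c + 1 + k).choose k : ℝ) ≠ 0 := by exact_mod_cast (Nat.choose_pos (by omega)).ne'
  rw [show ((c + 2 : ℕ) : ℝ) - 1 = c + 1 by push_cast; ring]
  push_cast
  field_simp

lemma mul_bask_eq {n : ℕ} (hn : 2 ≤ n) (k : ℕ) (t : ℝ) :
    t * bask n k t = (k + 1) / ((n : ℝ) - 1) * bask (n - 1) (k + 1) t := by
  obtain ⟨c, rfl⟩ := Nat.exists_eq_add_of_le' hn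
  rw [div_mul_eq_mul_div, show c + 2 - 1 = c + 1 by omega, succ_mul_bask_succ,
    show ((c + 2 : ℕ) : ℝ) - 1 = c + 1 by push_cast; ring]
  field_simp

lemma integrableOn_mul_bask {n : ℕ} (hn : 3 ≤ n) (k : ℕ) :
    IntegrableOn (fun t => t * bask n k t) (Ioi 0) := by
  simp_rw [mul_bask_eq (by omega : 2 ≤ n)]
  exact (integrableOn_bask (by omega) (k + 1)).const_mul _

lemma integral_mul_bask {n : ℕ} (hn : 3 ≤ n) (k : ℕ) :
    ∫ t in Ioi 0, t * bask n k t = (k + 1) / (((n : ℝ) - 1) * ((n : ℝ) - 2)) := by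
  simp_rw [mul_bask_eq (by omega : 2 ≤ n)]
  rw [integral_const_mul, integral_bask (by omega), Nat.cast_pred (by omega), sub_sub,
    one_add_one_eq_two]
  have : (n : ℝ) - 1 ≠ 0 := sub_ne_zero.2 (by norm_cast; omega)
  have : (n : ℝ) - 2 ≠ 0 := sub_ne_zero.2 (by norm_cast; omega)
  field_simp

lemma integrableOn_sq_mul_bask {n : ℕ} (hn : 4 ≤ n) (k : ℕ) :
    IntegrableOn (fun t => t ^ 2 * bask n k t) (Ioi 0) := by
  simp_rw [sq, mul_assoc, mul_bask_eq (by omega : 2 ≤ n), mul_left_comm _ ((_ : ℝ) / _)]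
  exact (integrableOn_mul_bask (by omega) (k + 1)).const_mul _

lemma integral_sq_mul_bask {n : ℕ} (hn : 4 ≤ n) (k : ℕ) :
    ∫ t in Ioi 0, t ^ 2 * bask n k t
      = (k + 1) * (k + 2) / (((n : ℝ) - 1) * ((n : ℝ) - 2) * ((n : ℝ) - 3)) := by
  simp_rw [sq, mul_assoc, mul_bask_eq (by omega : 2 ≤ n), mul_left_comm _ ((_ : ℝ) / _)]
  rw [integral_const_mul, integral_mul_bask (by omega), Nat.cast_pred (by omega), sub_sub,
    sub_sub, one_add_one_eq_two, show (1 : ℝ) + 2 = 3 by norm_num]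
  push_cast
  have : (n : ℝ) - 1 ≠ 0 := sub_ne_zero.2 (by norm_cast; omega)
  have : (n : ℝ) - 2 ≠ 0 := sub_ne_zero.2 (by norm_cast; omega)
  have : (n : ℝ) - 3 ≠ 0 := sub_ne_zero.2 (by norm_cast; omega)
  field_simp
  ring

noncomputable def durrmeyerMoment2 (n k : ℕ) (x : ℝ) : ℝ :=
  ((n : ℝ) - 1) * ∫ t in Ioi 0, bask n k t * (t - x) ^ 2

lemma bask_mul_sq_sub (n k : ℕ) (x t : ℝ) :
    bask n k t * (t - x) ^ 2
      = t ^ 2 * bask n k t - 2 * x * (t * bask n k t) + x ^ 2 * bask n k t := by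
  ring

lemma integrableOn_bask_mul_sq_sub {n : ℕ} (hn : 4 ≤ n) (k : ℕ) (x : ℝ) :
    IntegrableOn (fun t => bask n k t * (t - x) ^ 2) (Ioi 0) := by
  simp_rw [bask_mul_sq_sub]
  exact ((integrableOn_sq_mul_bask hn k).sub ((integrableOn_mul_bask (by omega) k).const_mul _)).add
    ((integrableOn_bask (by omega) k).const_mul _)

lemma durrmeyerMoment2_eq {n : ℕ} (hn : 4 ≤ n) (k : ℕ) (x : ℝ) :
    durrmeyerMoment2 n k x = (k + 1) * (k + 2) / (((n : ℝ) - 2) * ((n : ℝ) - 3))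
      - 2 * x * (k + 1) / ((n : ℝ) - 2) + x ^ 2 := by
  have h2 := integrableOn_sq_mul_bask hn k
  have h1 := (integrableOn_mul_bask (n := n) (by omega) k).const_mul (2 * x)
  have h0 := (integrableOn_bask (n := n) (by omega) k).const_mul (x ^ 2)
  rw [durrmeyerMoment2]
  simp_rw [bask_mul_sq_sub]
  rw [integral_add (h2.fun_sub h1) h0, integral_sub h2 h1, integral_const_mul, integral_const_mul,
    integral_sq_mul_bask hn, integral_mul_bask (by omega), integral_bask (by omega)]
  have : (n : ℝ) - 1 ≠ 0 := sub_ne_zero.2 (by norm_cast; omega)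
  have : (n : ℝ) - 2 ≠ 0 := sub_ne_zero.2 (by norm_cast; omega)
  have : (n : ℝ) - 3 ≠ 0 := sub_ne_zero.2 (by norm_cast; omega)
  field_simp

lemma abs_mul_integral_bask_mul_sub_le {n : ℕ} (hn : 4 ≤ n) (k : ℕ) {f : ℝ → ℝ} {x ε K : ℝ}
    (hf : AEStronglyMeasurable f (volume.restrict (Ioi 0)))
    (hfx : ∀ t ∈ Ioi (0 : ℝ), |f t - f x| ≤ ε + K * (t - x) ^ 2) :
    |((n : ℝ) - 1) * (∫ t in Ioi 0, bask n k t * f t) - f x| ≤ ε + K * durrmeyerMoment2 n k x := by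
  have hn1 : (0 : ℝ) < n - 1 := sub_pos.2 (by norm_cast; omega)
  have key := abs_integral_mul_sub_le (μ := volume.restrict (Ioi 0))
    (ρ := fun t => ((n : ℝ) - 1) * bask n k t) (g := fun t => K * (t - x) ^ 2)
    ((ae_restrict_iff' measurableSet_Ioi).2 (Eventually.of_forall fun t ht =>
      mul_nonneg hn1.le (bask_nonneg (le_of_lt ht))))
    ((integrableOn_bask (by omega) k).const_mul _)
    (by rw [integral_const_mul, integral_bask (by omega), mul_inv_cancel₀ hn1.ne'])
    (((integrableOn_bask_mul_sq_sub hn k x).const_mul (((n : ℝ) - 1) * K)).congr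
      (Eventually.of_forall fun t => by ring))
    hf ((ae_restrict_iff' measurableSet_Ioi).2 (Eventually.of_forall hfx))
  simp_rw [mul_assoc, mul_left_comm (bask n k _) K, integral_const_mul] at key
  rwa [mul_left_comm, ← durrmeyerMoment2] at key

lemma hasSum_bask {x : ℝ} (hx : 0 ≤ x) (n : ℕ) : HasSum (fun k => bask (n + 1) k x) 1 := by
  have h1 : 0 < 1 + x := by linarith
  have hr : ‖x / (1 + x)‖ < 1 := by
    rw [Real.norm_of_nonneg (by positivity), div_lt_one h1]
    linarith
  have h := (hasSum_choose_mul_geometric_of_norm_lt_one n hr).div_const ((1 + x) ^ (n + 1))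
  rw [show 1 - x / (1 + x) = (1 + x)⁻¹ by field_simp; ring, inv_pow, one_div, inv_inv,
    div_self (by positivity)] at h
  refine h.congr_fun fun k => ?_
  unfold bask
  rw [show n + 1 + k - 1 = k + n by omega, Nat.choose_symm_add, div_pow]
  field_simp
  ring

lemma hasSum_natCast_mul_bask {x : ℝ} (hx : 0 ≤ x) (n : ℕ) :
    HasSum (fun k : ℕ => (k : ℝ) * bask (n + 1) k x) ((n + 1) * x) := by
  have h := (hasSum_bask hx (n + 1)).mul_left ((n + 1) * x)
  simp_rw [mul_one, mul_assoc, ← succ_mul_bask_succ] at h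
  simpa using (hasSum_nat_add_iff (f := fun k : ℕ => (k : ℝ) * bask (n + 1) k x) 1).mp
    (by exact_mod_cast h)

lemma hasSum_natCast_mul_sub_one_mul_bask {x : ℝ} (hx : 0 ≤ x) (n : ℕ) :
    HasSum (fun k : ℕ => (k : ℝ) * (k - 1) * bask (n + 1) k x) ((n + 1) * (n + 2) * x ^ 2) := by
  have h := (hasSum_natCast_mul_bask hx (n + 1)).mul_left ((n + 1) * x)
  have e : ∀ k : ℕ, (n + 1) * x * (k * bask (n + 1 + 1) k x)
      = ((k + 1 : ℕ) : ℝ) * ((k + 1 : ℕ) - 1) * bask (n + 1) (k + 1) x := by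
    intro k
    push_cast
    linear_combination -(k : ℝ) * succ_mul_bask_succ n k x
  simp_rw [e] at h
  have h' := (hasSum_nat_add_iff (f := fun k : ℕ => (k : ℝ) * (k - 1) * bask (n + 1) k x) 1).mp h
  simp only [Finset.sum_range_one, Nat.cast_zero, zero_mul, add_zero] at h'
  rwa [show ((n : ℝ) + 1) * x * ((((n + 1 : ℕ) : ℝ) + 1) * x) = (n + 1) * (n + 2) * x ^ 2 by
    push_cast; ring] at h'

lemma hasSum_bask_mul_quadratic {x : ℝ} (hx : 0 ≤ x) (n : ℕ) (a b c : ℝ) :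
    HasSum (fun k : ℕ => bask (n + 1) k x * (a * (k * (k - 1)) + b * k + c))
      (a * ((n + 1) * (n + 2) * x ^ 2) + b * ((n + 1) * x) + c) := by
  have h := (((hasSum_natCast_mul_sub_one_mul_bask hx n).mul_left a).add
    ((hasSum_natCast_mul_bask hx n).mul_left b)).add ((hasSum_bask hx n).mul_left c)
  rw [mul_one] at h
  exact h.congr_fun fun k => by ring

noncomputable def baskPred (n k : ℕ) (x : ℝ) : ℝ := if k = 0 then 0 else bask n (k - 1) x

lemma baskPred_nonneg {n k : ℕ} {x : ℝ} (hx : 0 ≤ x) : 0 ≤ baskPred n k x := by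
  unfold baskPred
  split_ifs
  exacts [le_rfl, bask_nonneg hx]

lemma hasSum_baskPred_mul {n : ℕ} {x s : ℝ} {g : ℕ → ℝ}
    (h : HasSum (fun k => bask n k x * g (k + 1)) s) :
    HasSum (fun k => baskPred n k x * g k) s := by
  simpa [baskPred] using (hasSum_nat_add_iff (f := fun k => baskPred n k x * g k) 1).mp h

lemma hasSum_baskPred {x : ℝ} (hx : 0 ≤ x) (n : ℕ) : HasSum (fun k => baskPred (n + 1) k x) 1 :=
  (hasSum_baskPred_mul (g := fun _ => 1)
    ((hasSum_bask hx n).congr_fun fun _ => mul_one _)).congr_fun fun _ => (mul_one _).symm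

noncomputable def durrmeyerMoment2Sum (n : ℕ) (x : ℝ) : ℝ :=
  (4 * (n + 7) * (x ^ 2 + x) + 8) / (((n : ℝ) - 2) * ((n : ℝ) - 3))

lemma hasSum_bask_add_baskPred_mul_durrmeyerMoment2 {x : ℝ} (hx : 0 ≤ x) {n : ℕ} (hn : 4 ≤ n) :
    HasSum (fun k => (bask (n + 1) k x + baskPred (n + 1) k x) * durrmeyerMoment2 n k x)
      (durrmeyerMoment2Sum n x) := by
  obtain ⟨A, hA⟩ : ∃ A : ℝ, A = (((n : ℝ) - 2) * ((n : ℝ) - 3))⁻¹ := ⟨_, rfl⟩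
  obtain ⟨B, hB⟩ : ∃ B : ℝ, B = ((n : ℝ) - 2)⁻¹ := ⟨_, rfl⟩
  have e₀ : ∀ k : ℕ, durrmeyerMoment2 n k x
      = A * (k * (k - 1)) + (4 * A - 2 * x * B) * k + (2 * A - 2 * x * B + x ^ 2) := by
    intro k
    rw [durrmeyerMoment2_eq hn, hA, hB]
    ring
  have e₁ : ∀ k : ℕ, durrmeyerMoment2 n (k + 1) x
      = A * (k * (k - 1)) + (6 * A - 2 * x * B) * k + (6 * A - 4 * x * B + x ^ 2) := by
    intro k
    rw [durrmeyerMoment2_eq hn, hA, hB]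
    push_cast
    ring
  have h₀ := (hasSum_bask_mul_quadratic hx n A (4 * A - 2 * x * B)
    (2 * A - 2 * x * B + x ^ 2)).congr_fun
    (g := fun k => bask (n + 1) k x * durrmeyerMoment2 n k x) fun k => by rw [e₀]
  have h₁ := (hasSum_bask_mul_quadratic hx n A (6 * A - 2 * x * B)
    (6 * A - 4 * x * B + x ^ 2)).congr_fun
    (g := fun k => bask (n + 1) k x * durrmeyerMoment2 n (k + 1) x) fun k => by rw [e₁]
  have h := (h₀.add (hasSum_baskPred_mul (g := fun k => durrmeyerMoment2 n k x) h₁)).congr_fun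
    (g := fun k => (bask (n + 1) k x + baskPred (n + 1) k x) * durrmeyerMoment2 n k x)
    fun k => add_mul _ _ _
  convert h using 1
  have : (n : ℝ) - 2 ≠ 0 := sub_ne_zero.2 (by norm_cast; omega)
  have : (n : ℝ) - 3 ≠ 0 := sub_ne_zero.2 (by norm_cast; omega)
  rw [hA, hB, durrmeyerMoment2Sum]
  field_simp
  ring

lemma tendsto_durrmeyerMoment2Sum_atTop (x : ℝ) :
    Tendsto (fun n => durrmeyerMoment2Sum n x) atTop (𝓝 0) := by
  open Polynomial in
  have h := div_tendsto_atTop_zero_of_degree_lt (C (4 * (x ^ 2 + x)) * (X + C 7) + C 8)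
    ((X - C 2) * (X - C 3)) (by
      rw [degree_mul, degree_X_sub_C, degree_X_sub_C]
      refine (degree_add_le _ _).trans_lt (max_lt ?_ (degree_C_le.trans_lt (by norm_num)))
      refine (degree_mul_le _ _).trans_lt ?_
      refine (add_le_add degree_C_le (degree_X_add_C 7).le).trans_lt ?_
      norm_num)
  refine (h.comp tendsto_natCast_atTop_atTop).congr fun n => ?_
  simp only [Function.comp_apply, eval_add, eval_mul, eval_sub, eval_C, eval_X,
    durrmeyerMoment2Sum]
  ring

lemma p1_eq (a0 a1 : ℕ → ℝ) (n k : ℕ) (x : ℝ) :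
    p1 a0 a1 n k x
      = (a0 n + a1 n * x) * bask (n + 1) k x + (a0 n - a1 n * (1 + x)) * baskPred (n + 1) k x :=
  rfl

lemma hasSum_p1 {a0 a1 : ℕ → ℝ} {n : ℕ} {x : ℝ} (hx : 0 ≤ x) (hrel : 2 * a0 n - a1 n = 1) :
    HasSum (fun k => p1 a0 a1 n k x) 1 := by
  have h := ((hasSum_bask hx n).mul_left (a0 n + a1 n * x)).add
    ((hasSum_baskPred hx n).mul_left (a0 n - a1 n * (1 + x)))
  rwa [mul_one, mul_one, show a0 n + a1 n * x + (a0 n - a1 n * (1 + x)) = 1 by linarith] at h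

lemma abs_p1_le {a0 a1 : ℕ → ℝ} {n k : ℕ} {x C : ℝ} (hx : 0 ≤ x)
    (ha : |a0 n + a1 n * x| ≤ C) (hb : |a0 n - a1 n * (1 + x)| ≤ C) :
    |p1 a0 a1 n k x| ≤ C * (bask (n + 1) k x + baskPred (n + 1) k x) := by
  have hw := bask_nonneg (n := n + 1) (k := k) hx
  have hw' := baskPred_nonneg (n := n + 1) (k := k) hx
  calc |p1 a0 a1 n k x|
      ≤ |a0 n + a1 n * x| * bask (n + 1) k x + |a0 n - a1 n * (1 + x)| * baskPred (n + 1) k x := by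
        rw [p1_eq]
        refine (abs_add_le _ _).trans_eq ?_
        rw [abs_mul, abs_mul, abs_of_nonneg hw, abs_of_nonneg hw']
    _ ≤ C * (bask (n + 1) k x + baskPred (n + 1) k x) := by
        rw [mul_add C]
        gcongr

lemma abs_V1_sub_le {a0 a1 : ℕ → ℝ} {n : ℕ} (hn : 4 ≤ n) {f : ℝ → ℝ} {x C ε K : ℝ} (hx : 0 ≤ x)
    (hrel : 2 * a0 n - a1 n = 1) (ha : |a0 n + a1 n * x| ≤ C) (hb : |a0 n - a1 n * (1 + x)| ≤ C)
    (hf : AEStronglyMeasurable f (volume.restrict (Ioi 0)))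
    (hfx : ∀ t ∈ Ioi (0 : ℝ), |f t - f x| ≤ ε + K * (t - x) ^ 2) :
    |V1 a0 a1 n f x - f x|
      ≤ C * (2 * ε + K * durrmeyerMoment2Sum n x) := by
  have hmaj := ((((hasSum_bask hx n).add (hasSum_baskPred hx n)).mul_right ε).add
    ((hasSum_bask_add_baskPred_mul_durrmeyerMoment2 hx hn).mul_left K)).mul_left C
  rw [one_add_one_eq_two] at hmaj
  have hbound : ∀ k, ‖p1 a0 a1 n k x * (((n : ℝ) - 1) * (∫ t in Ioi 0, bask n k t * f t) - f x)‖
      ≤ C * ((bask (n + 1) k x + baskPred (n + 1) k x) * ε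
        + K * ((bask (n + 1) k x + baskPred (n + 1) k x) * durrmeyerMoment2 n k x)) := by
    intro k
    rw [norm_mul, Real.norm_eq_abs, Real.norm_eq_abs, mul_left_comm K, ← mul_add, ← mul_assoc]
    exact mul_le_mul (abs_p1_le hx ha hb) (abs_mul_integral_bask_mul_sub_le hn k hf hfx)
      (abs_nonneg _) (mul_nonneg ((abs_nonneg _).trans ha)
        (add_nonneg (bask_nonneg hx) (baskPred_nonneg hx)))
  rw [V1, ← tsum_mul_left]
  simp_rw [mul_left_comm ((n : ℝ) - 1)]
  rw [tsum_mul_sub_of_hasSum_one (hasSum_p1 hx hrel)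
    (Summable.of_norm_bounded hmaj.summable hbound), ← Real.norm_eq_abs]
  exact tsum_of_norm_bounded hmaj hbound

theorem V1_pointwise_convergence (f : ℝ → ℝ)
    (hf_cont : ContinuousOn f (Set.Ici 0))
    (hf_bdd : ∃ M : ℝ, ∀ t ∈ Set.Ici (0 : ℝ), |f t| ≤ M)
    (a0 a1 : ℕ → ℝ)
    (ha0 : ∃ l : ℝ, Tendsto a0 atTop (𝓝 l)) (ha1 : ∃ m : ℝ, Tendsto a1 atTop (𝓝 m))
    (hrel : ∀ n : ℕ, 2 * a0 n - a1 n = 1)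
    (x : ℝ) (hx : 0 ≤ x) :
    Tendsto (fun n : ℕ => V1 a0 a1 n f x) atTop (𝓝 (f x)) := by
  obtain ⟨M, hM⟩ := hf_bdd
  obtain ⟨l, hl⟩ := ha0
  obtain ⟨m, hm⟩ := ha1
  obtain ⟨C, hC⟩ :=
    ((hl.add (hm.mul_const x)).abs.max (hl.sub (hm.mul_const (1 + x))).abs).bddAbove_range
  have hCn (n : ℕ) := max_le_iff.1 (hC ⟨n, rfl⟩)
  have hfm : AEStronglyMeasurable f (volume.restrict (Ioi 0)) :=
    (hf_cont.mono Ioi_subset_Ici_self).aestronglyMeasurable measurableSet_Ioi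
  refine tendsto_of_forall_eventually_abs_sub_le (C := 2 * C) fun ε hε => ?_
  obtain ⟨K, hK⟩ := exists_abs_sub_le_add_mul_sq (hf_cont x hx) hx hM hε
  refine ⟨fun n => C * K * durrmeyerMoment2Sum n x, ?_, ?_⟩
  · simpa using (tendsto_durrmeyerMoment2Sum_atTop x).const_mul (C * K)
  · filter_upwards [eventually_ge_atTop 4] with n hn
    exact (abs_V1_sub_le hn hx (hrel n) (hCn n).1 (hCn n).2 hfm
      fun t ht => hK t (Ioi_subset_Ici_self ht)).trans_eq (by ring)
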